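/- arXiv:2102.13083 — 6 statements merged into one kernel-verified Lean document; each statement's English description precedes it below -/
import Mathlib

section
/- Let (𝒳, 𝒜) be a measurable space, {P_θ : θ ∈ Θ} a family of probability measures on it, and γ : Θ → ℝ^d an estimand. Let δ₀, g₁, g₂ : 𝒳 → ℝ^d be measurable, let ω ∈ (0,1), and assume all risks below are finite. For i = 1, 2, write R_ω(θ, δ) = ∫ [ω ‖δ(x)−δ₀(x)‖² + (1−ω) ‖δ(x)−γ(θ)‖²] dP_θ(x) and R₀(θ, δ) = ∫ ‖δ(x)−γ(θ)‖² dP_θ(x). Then δ₀ + (1−ω) g₁ dominates δ₀ + (1−ω) g₂ under the balanced squared-error loss (i.e., R_ω(θ, δ₀+(1−ω)g₁) ≤ R_ω(θ, δ₀+(1−ω)g₂) for all θ, with strict inequality for some θ) if and only if δ₀ + g₁ dominates δ₀ + g₂ under squared-error loss (i.e., R₀(θ, δ₀+g₁) ≤ R₀(θ, δ₀+g₂) for all θ, with strict inequality for some θ). -/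
open MeasureTheory Set

/-!
Expanding the squares around `δ₀ - γ(θ)`, the balanced loss of `δ₀ + (1-ω)g` equals pointwise
`(1-ω)² ‖δ₀ + g - γ(θ)‖² + ω(1-ω) ‖δ₀ - γ(θ)‖²`. Integrating, the balanced risk of
`δ₀ + (1-ω)g` is `(1-ω)²` times the squared-error risk of `δ₀ + g` plus a term that does not
depend on `g`, so both risk orderings coincide for every `θ`.
-/

section BalancedLoss

variable {E : Type*} [NormedAddCommGroup E] [InnerProductSpace ℝ E]

theorem balanced_loss_shrink_eq (δ₀ g c : E) (ω : ℝ) :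
    ω * ‖(δ₀ + (1 - ω) • g) - δ₀‖ ^ 2 + (1 - ω) * ‖(δ₀ + (1 - ω) • g) - c‖ ^ 2
      = (1 - ω) ^ 2 * ‖(δ₀ + g) - c‖ ^ 2 + ω * (1 - ω) * ‖δ₀ - c‖ ^ 2 := by
  rw [add_sub_cancel_left, add_sub_right_comm, add_sub_right_comm, norm_add_sq_real,
    norm_add_sq_real, real_inner_smul_right]
  simp only [norm_smul, Real.norm_eq_abs, mul_pow, sq_abs]
  ring

variable {𝒳 : Type*} [MeasurableSpace 𝒳]

theorem integral_balanced_loss_shrink_eq (μ : Measure 𝒳) (c : E) (δ₀ g : 𝒳 → E) (ω : ℝ)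
    (hbal : Integrable (fun x =>
      ω * ‖(δ₀ x + (1 - ω) • g x) - δ₀ x‖ ^ 2
        + (1 - ω) * ‖(δ₀ x + (1 - ω) • g x) - c‖ ^ 2) μ)
    (hsq : Integrable (fun x => ‖(δ₀ x + g x) - c‖ ^ 2) μ) :
    ∫ x, (ω * ‖(δ₀ x + (1 - ω) • g x) - δ₀ x‖ ^ 2
        + (1 - ω) * ‖(δ₀ x + (1 - ω) • g x) - c‖ ^ 2) ∂μ
      = (1 - ω) ^ 2 * ∫ x, ‖(δ₀ x + g x) - c‖ ^ 2 ∂μ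
        + ∫ x, ω * (1 - ω) * ‖δ₀ x - c‖ ^ 2 ∂μ := by
  simp_rw [balanced_loss_shrink_eq] at hbal ⊢
  have hrest : Integrable (fun x => ω * (1 - ω) * ‖δ₀ x - c‖ ^ 2) μ := by
    refine (hbal.sub (hsq.const_mul ((1 - ω) ^ 2))).congr (ae_of_all _ fun x => ?_)
    simp only [Pi.sub_apply, add_sub_cancel_left]
  rw [integral_add (hsq.const_mul _) hrest, integral_const_mul]

end BalancedLoss

def Dominates {Θ : Type*} (R₁ R₂ : Θ → ℝ) : Prop :=
  (∀ θ, R₁ θ ≤ R₂ θ) ∧ ∃ θ, R₁ θ < R₂ θ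

theorem dominates_iff_of_affine {Θ : Type*} {R₁ R₂ S₁ S₂ b : Θ → ℝ} {a : ℝ} (ha : 0 < a)
    (h₁ : ∀ θ, R₁ θ = a * S₁ θ + b θ) (h₂ : ∀ θ, R₂ θ = a * S₂ θ + b θ) :
    Dominates R₁ R₂ ↔ Dominates S₁ S₂ := by
  simp only [Dominates, h₁, h₂, add_le_add_iff_right, add_lt_add_iff_right,
    mul_le_mul_iff_of_pos_left ha, mul_lt_mul_iff_of_pos_left ha]

theorem stmt3_general {𝒳 : Type*} [MeasurableSpace 𝒳] {Θ : Type*} (d : ℕ)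
    (P : Θ → Measure 𝒳)
    (γ : Θ → EuclideanSpace ℝ (Fin d))
    (δ₀ g₁ g₂ : 𝒳 → EuclideanSpace ℝ (Fin d))
    (ω : ℝ) (hω : ω ∈ Ioo (0 : ℝ) 1)
    (hint₁ : ∀ θ, Integrable (fun x =>
      ω * ‖(δ₀ x + (1 - ω) • g₁ x) - δ₀ x‖ ^ 2
        + (1 - ω) * ‖(δ₀ x + (1 - ω) • g₁ x) - γ θ‖ ^ 2) (P θ))
    (hint₂ : ∀ θ, Integrable (fun x =>
      ω * ‖(δ₀ x + (1 - ω) • g₂ x) - δ₀ x‖ ^ 2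
        + (1 - ω) * ‖(δ₀ x + (1 - ω) • g₂ x) - γ θ‖ ^ 2) (P θ))
    (hint₃ : ∀ θ, Integrable (fun x => ‖(δ₀ x + g₁ x) - γ θ‖ ^ 2) (P θ))
    (hint₄ : ∀ θ, Integrable (fun x => ‖(δ₀ x + g₂ x) - γ θ‖ ^ 2) (P θ)) :
    ((∀ θ, (∫ x, (ω * ‖(δ₀ x + (1 - ω) • g₁ x) - δ₀ x‖ ^ 2
            + (1 - ω) * ‖(δ₀ x + (1 - ω) • g₁ x) - γ θ‖ ^ 2) ∂(P θ))
          ≤ ∫ x, (ω * ‖(δ₀ x + (1 - ω) • g₂ x) - δ₀ x‖ ^ 2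
            + (1 - ω) * ‖(δ₀ x + (1 - ω) • g₂ x) - γ θ‖ ^ 2) ∂(P θ))
      ∧ (∃ θ, (∫ x, (ω * ‖(δ₀ x + (1 - ω) • g₁ x) - δ₀ x‖ ^ 2
            + (1 - ω) * ‖(δ₀ x + (1 - ω) • g₁ x) - γ θ‖ ^ 2) ∂(P θ))
          < ∫ x, (ω * ‖(δ₀ x + (1 - ω) • g₂ x) - δ₀ x‖ ^ 2
            + (1 - ω) * ‖(δ₀ x + (1 - ω) • g₂ x) - γ θ‖ ^ 2) ∂(P θ)))
    ↔ ((∀ θ, (∫ x, ‖(δ₀ x + g₁ x) - γ θ‖ ^ 2 ∂(P θ))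
          ≤ ∫ x, ‖(δ₀ x + g₂ x) - γ θ‖ ^ 2 ∂(P θ))
      ∧ (∃ θ, (∫ x, ‖(δ₀ x + g₁ x) - γ θ‖ ^ 2 ∂(P θ))
          < ∫ x, ‖(δ₀ x + g₂ x) - γ θ‖ ^ 2 ∂(P θ))) := by
  have hω₁ : 0 < (1 - ω) ^ 2 := pow_pos (sub_pos.mpr hω.2) 2
  exact dominates_iff_of_affine hω₁
    (fun θ => integral_balanced_loss_shrink_eq (P θ) (γ θ) δ₀ g₁ ω (hint₁ θ) (hint₃ θ))
    (fun θ => integral_balanced_loss_shrink_eq (P θ) (γ θ) δ₀ g₂ ω (hint₂ θ) (hint₄ θ))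

/-- (Corollary 1 of Marchand–Strawderman.) For balanced squared-error loss
with weight `ω ∈ (0,1)` and target `δ₀`, `δ₀ + (1-ω)g₁` dominates `δ₀ + (1-ω)g₂` if and only
if `δ₀ + g₁` dominates `δ₀ + g₂` under squared-error loss. -/
theorem stmt3 {𝒳 : Type*} [MeasurableSpace 𝒳] {Θ : Type*} (d : ℕ)
    (P : Θ → Measure 𝒳) (hP : ∀ θ, IsProbabilityMeasure (P θ))
    (γ : Θ → EuclideanSpace ℝ (Fin d))
    (δ₀ g₁ g₂ : 𝒳 → EuclideanSpace ℝ (Fin d))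
    (hδ₀ : Measurable δ₀) (hg₁ : Measurable g₁) (hg₂ : Measurable g₂)
    (ω : ℝ) (hω : ω ∈ Ioo (0 : ℝ) 1)
    (hint₁ : ∀ θ, Integrable (fun x =>
      ω * ‖(δ₀ x + (1 - ω) • g₁ x) - δ₀ x‖ ^ 2
        + (1 - ω) * ‖(δ₀ x + (1 - ω) • g₁ x) - γ θ‖ ^ 2) (P θ))
    (hint₂ : ∀ θ, Integrable (fun x =>
      ω * ‖(δ₀ x + (1 - ω) • g₂ x) - δ₀ x‖ ^ 2
        + (1 - ω) * ‖(δ₀ x + (1 - ω) • g₂ x) - γ θ‖ ^ 2) (P θ))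
    (hint₃ : ∀ θ, Integrable (fun x => ‖(δ₀ x + g₁ x) - γ θ‖ ^ 2) (P θ))
    (hint₄ : ∀ θ, Integrable (fun x => ‖(δ₀ x + g₂ x) - γ θ‖ ^ 2) (P θ)) :
    ((∀ θ, (∫ x, (ω * ‖(δ₀ x + (1 - ω) • g₁ x) - δ₀ x‖ ^ 2
            + (1 - ω) * ‖(δ₀ x + (1 - ω) • g₁ x) - γ θ‖ ^ 2) ∂(P θ))
          ≤ ∫ x, (ω * ‖(δ₀ x + (1 - ω) • g₂ x) - δ₀ x‖ ^ 2
            + (1 - ω) * ‖(δ₀ x + (1 - ω) • g₂ x) - γ θ‖ ^ 2) ∂(P θ))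
      ∧ (∃ θ, (∫ x, (ω * ‖(δ₀ x + (1 - ω) • g₁ x) - δ₀ x‖ ^ 2
            + (1 - ω) * ‖(δ₀ x + (1 - ω) • g₁ x) - γ θ‖ ^ 2) ∂(P θ))
          < ∫ x, (ω * ‖(δ₀ x + (1 - ω) • g₂ x) - δ₀ x‖ ^ 2
            + (1 - ω) * ‖(δ₀ x + (1 - ω) • g₂ x) - γ θ‖ ^ 2) ∂(P θ)))
    ↔ ((∀ θ, (∫ x, ‖(δ₀ x + g₁ x) - γ θ‖ ^ 2 ∂(P θ))
          ≤ ∫ x, ‖(δ₀ x + g₂ x) - γ θ‖ ^ 2 ∂(P θ))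
      ∧ (∃ θ, (∫ x, ‖(δ₀ x + g₁ x) - γ θ‖ ^ 2 ∂(P θ))
          < ∫ x, ‖(δ₀ x + g₂ x) - γ θ‖ ^ 2 ∂(P θ))) :=
  stmt3_general d P γ δ₀ g₁ g₂ ω hω hint₁ hint₂ hint₃ hint₄
end

section
/- Let ℓ : [0,∞) → [0,∞) be differentiable, nondecreasing, and concave, and let ω ∈ [0,1). Then for all vectors u, θ, g ∈ ℝ^d, writing δ = u + (1−ω)g, one has ℓ( ω‖δ−u‖² + (1−ω)‖δ−θ‖² ) − ℓ( (1−ω)‖u−θ‖² ) ≤ (1−ω)² ℓ'( (1−ω)‖u−θ‖² ) ( ‖u+g−θ‖² − ‖u−θ‖² ). -/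
open Set

/-! The argument of the balanced loss at `δ` exceeds `(1-ω)‖u-θ‖²` by exactly `(1-ω)²` times the
squared-error difference `‖u+g-θ‖² - ‖u-θ‖²`, so the claim is the tangent-line inequality for the
concave `ℓ` at `(1-ω)‖u-θ‖²`; both arguments lie in `[0,∞)` because `0 ≤ ω ≤ 1`. -/

lemma ConcaveOn.sub_le_derivWithin_mul {S : Set ℝ} {f : ℝ → ℝ} (hf : ConcaveOn ℝ S f)
    {a x : ℝ} (ha : a ∈ S) (hx : x ∈ S) (hfd : DifferentiableWithinAt ℝ f S a) :
    f x - f a ≤ derivWithin f S a * (x - a) := by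
  rcases lt_trichotomy a x with hax | rfl | hxa
  · have hslope := hf.slope_le_derivWithin ha hx hax hfd
    rwa [slope_def_field, div_le_iff₀ (sub_pos.2 hax)] at hslope
  · simp
  · have hslope := hf.derivWithin_le_slope hx ha hxa hfd
    rw [slope_def_field, le_div_iff₀ (sub_pos.2 hxa)] at hslope
    linarith [show derivWithin f S a * (x - a) = -(derivWithin f S a * (a - x)) by ring]

lemma weighted_norm_sq_shrink_sub_eq {E : Type*} [NormedAddCommGroup E] [InnerProductSpace ℝ E]
    (ω : ℝ) (u θ g : E) :
    ω * ‖(u + (1 - ω) • g) - u‖ ^ 2 + (1 - ω) * ‖(u + (1 - ω) • g) - θ‖ ^ 2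
        - (1 - ω) * ‖u - θ‖ ^ 2
      = (1 - ω) ^ 2 * (‖u + g - θ‖ ^ 2 - ‖u - θ‖ ^ 2) := by
  rw [add_sub_cancel_left, add_sub_right_comm u _ θ, add_sub_right_comm u g, norm_add_sq_real,
    norm_add_sq_real, norm_smul, inner_smul_right, mul_pow, Real.norm_eq_abs, sq_abs]
  ring

theorem stmt4_general (d : ℕ)
    (ℓ : ℝ → ℝ)
    (hℓ_diff : DifferentiableOn ℝ ℓ (Ici 0))
    (hℓ_concave : ConcaveOn ℝ (Ici 0) ℓ)
    (ω : ℝ) (hω0 : 0 ≤ ω) (hω1 : ω < 1)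
    (u θ g : EuclideanSpace ℝ (Fin d)) :
    ℓ (ω * ‖(u + (1 - ω) • g) - u‖ ^ 2 + (1 - ω) * ‖(u + (1 - ω) • g) - θ‖ ^ 2)
        - ℓ ((1 - ω) * ‖u - θ‖ ^ 2)
      ≤ (1 - ω) ^ 2 * derivWithin ℓ (Ici 0) ((1 - ω) * ‖u - θ‖ ^ 2)
          * (‖u + g - θ‖ ^ 2 - ‖u - θ‖ ^ 2) := by
  have hω : 0 ≤ 1 - ω := by linarith
  have ha : (1 - ω) * ‖u - θ‖ ^ 2 ∈ Ici 0 := mul_nonneg hω (sq_nonneg _)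
  have hx : ω * ‖(u + (1 - ω) • g) - u‖ ^ 2 + (1 - ω) * ‖(u + (1 - ω) • g) - θ‖ ^ 2 ∈ Ici 0 :=
    add_nonneg (mul_nonneg hω0 (sq_nonneg _)) (mul_nonneg hω (sq_nonneg _))
  calc _ ≤ _ := hℓ_concave.sub_le_derivWithin_mul ha hx (hℓ_diff _ ha)
    _ = _ := by rw [weighted_norm_sq_shrink_sub_eq]; ring

/-- (Lemma 6 of Marchand–Strawderman.) For differentiable, nondecreasing,
concave `ℓ : [0,∞) → [0,∞)` and `ω ∈ [0,1)`, with `δ = u + (1-ω)g`,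
`ℓ(ω‖δ-u‖² + (1-ω)‖δ-θ‖²) - ℓ((1-ω)‖u-θ‖²) ≤ (1-ω)² ℓ'((1-ω)‖u-θ‖²)(‖u+g-θ‖² - ‖u-θ‖²)`. -/
theorem stmt4 (d : ℕ)
    (ℓ : ℝ → ℝ) (hℓ_nonneg : ∀ t, 0 ≤ t → 0 ≤ ℓ t)
    (hℓ_diff : DifferentiableOn ℝ ℓ (Ici 0))
    (hℓ_mono : MonotoneOn ℓ (Ici 0))
    (hℓ_concave : ConcaveOn ℝ (Ici 0) ℓ)
    (ω : ℝ) (hω0 : 0 ≤ ω) (hω1 : ω < 1)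
    (u θ g : EuclideanSpace ℝ (Fin d)) :
    ℓ (ω * ‖(u + (1 - ω) • g) - u‖ ^ 2 + (1 - ω) * ‖(u + (1 - ω) • g) - θ‖ ^ 2)
        - ℓ ((1 - ω) * ‖u - θ‖ ^ 2)
      ≤ (1 - ω) ^ 2 * derivWithin ℓ (Ici 0) ((1 - ω) * ‖u - θ‖ ^ 2)
          * (‖u + g - θ‖ ^ 2 - ‖u - θ‖ ^ 2) :=
  stmt4_general d ℓ hℓ_diff hℓ_concave ω hω0 hω1 u θ g
end

section
/- Let d ≥ 4 be an integer and let s : [0,∞) → [0,∞) be twice differentiable, nonnegative, and concave (hence nondecreasing). Then the function g : ℝ^d \ {0} → ℝ defined by g(x) = s(‖x‖²)/‖x‖² is superharmonic on ℝ^d \ {0}; that is, its Laplacian Δg(x) = Σ_{k=1}^d ∂²g/∂x_k²(x) satisfies Δg(x) ≤ 0 for every x ≠ 0. -/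
open Set Filter Topology
open scoped InnerProductSpace

/-!
Write `t = ‖x‖²` and `g = φ(‖·‖²)` with `φ(u) = s(u)/u`. For any radial function of this form
`Δg = 2d φ'(t) + 4t φ''(t)`, and for `φ = s/u` this becomes
`Δg = 4 s''(t) + (2d - 8) (t s'(t) - s(t)) / t²`.
Concavity gives `s'' ≤ 0`, and the tangent line at `t` lies above `s(0) ≥ 0`, so
`t s'(t) - s(t) ≤ 0`; both terms are nonpositive once `d ≥ 4`.
-/

noncomputable def coordLaplacian {ι : Type*} [Fintype ι] [DecidableEq ι]
    (g : EuclideanSpace ℝ ι → ℝ) (x : EuclideanSpace ℝ ι) : ℝ :=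
  ∑ k, fderiv ℝ (fun y => fderiv ℝ g y (EuclideanSpace.single k 1)) x
    (EuclideanSpace.single k 1)

lemma ConcaveOn.sub_mul_derivWithin_le {S : Set ℝ} {f : ℝ → ℝ} {a t : ℝ}
    (hf : ConcaveOn ℝ S f) (ha : a ∈ S) (ht : t ∈ S) (hat : a < t)
    (hd : DifferentiableWithinAt ℝ f S t) :
    (t - a) * derivWithin f S t ≤ f t - f a := by
  have h := hf.derivWithin_le_slope ha ht hat hd
  rwa [slope_def_field, le_div_iff₀ (sub_pos.2 hat), mul_comm] at h

section RadialDerivatives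

variable {E : Type*} [NormedAddCommGroup E] [InnerProductSpace ℝ E]

lemma hasFDerivAt_comp_norm_sq {φ : ℝ → ℝ} {c : ℝ} {y : E} (h : HasDerivAt φ c (‖y‖ ^ 2)) :
    HasFDerivAt (fun z => φ (‖z‖ ^ 2)) (c • 2 • innerSL ℝ y) y :=
  h.comp_hasFDerivAt y (hasStrictFDerivAt_norm_sq y).hasFDerivAt

lemma fderiv_comp_norm_sq_apply {φ : ℝ → ℝ} {c : ℝ} {y : E} (h : HasDerivAt φ c (‖y‖ ^ 2))
    (v : E) : fderiv ℝ (fun z => φ (‖z‖ ^ 2)) y v = 2 * c * ⟪y, v⟫_ℝ := by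
  rw [(hasFDerivAt_comp_norm_sq h).fderiv]
  simp [mul_comm, mul_left_comm]

lemma fderiv_fderiv_comp_norm_sq_apply {φ φ' : ℝ → ℝ} {φ'' : ℝ} {x : E}
    (hφ : ∀ᶠ u in 𝓝 (‖x‖ ^ 2), HasDerivAt φ (φ' u) u) (hφ' : HasDerivAt φ' φ'' (‖x‖ ^ 2))
    (v : E) :
    fderiv ℝ (fun y => fderiv ℝ (fun z => φ (‖z‖ ^ 2)) y v) x v =
      2 * φ' (‖x‖ ^ 2) * ‖v‖ ^ 2 + 4 * φ'' * ⟪x, v⟫_ℝ ^ 2 := by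
  have hev : (fun y => fderiv ℝ (fun z => φ (‖z‖ ^ 2)) y v) =ᶠ[𝓝 x]
      fun y => 2 * φ' (‖y‖ ^ 2) * ⟪y, v⟫_ℝ := by
    have hcont : Tendsto (fun y : E => ‖y‖ ^ 2) (𝓝 x) (𝓝 (‖x‖ ^ 2)) :=
      (continuous_norm.pow 2).tendsto x
    filter_upwards [hcont.eventually hφ] with y hy
    exact fderiv_comp_norm_sq_apply hy v
  have hderiv := ((hasFDerivAt_comp_norm_sq hφ').const_mul 2).mul
    ((innerSL ℝ v).hasFDerivAt (x := x))
  have hfun : (fun y => 2 * φ' (‖y‖ ^ 2) * ⟪y, v⟫_ℝ) =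
      (fun y => 2 * φ' (‖y‖ ^ 2)) * ⇑(innerSL ℝ v) := by
    ext y
    simp [real_inner_comm]
  rw [hev.fderiv_eq, hfun, hderiv.fderiv]
  simp [real_inner_comm]
  ring

end RadialDerivatives

section Laplacian

variable {ι : Type*} [Fintype ι] [DecidableEq ι]

lemma coordLaplacian_comp_norm_sq {φ φ' : ℝ → ℝ} {φ'' : ℝ} {x : EuclideanSpace ℝ ι}
    (hφ : ∀ᶠ u in 𝓝 (‖x‖ ^ 2), HasDerivAt φ (φ' u) u) (hφ' : HasDerivAt φ' φ'' (‖x‖ ^ 2)) :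
    coordLaplacian (fun z => φ (‖z‖ ^ 2)) x =
      2 * Fintype.card ι * φ' (‖x‖ ^ 2) + 4 * ‖x‖ ^ 2 * φ'' := by
  simp only [coordLaplacian, fderiv_fderiv_comp_norm_sq_apply hφ hφ', PiLp.norm_single, norm_one,
    one_pow, mul_one, EuclideanSpace.inner_single_right, one_mul, conj_trivial]
  rw [Finset.sum_add_distrib, ← Finset.mul_sum, ← Finset.mul_sum, ← EuclideanSpace.real_norm_sq_eq,
    Finset.sum_const, Finset.card_univ, nsmul_eq_mul]
  ring

lemma coordLaplacian_div_norm_sq {s s' : ℝ → ℝ} {s'' : ℝ} {x : EuclideanSpace ℝ ι} (hx : x ≠ 0)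
    (hs : ∀ᶠ u in 𝓝 (‖x‖ ^ 2), HasDerivAt s (s' u) u) (hs' : HasDerivAt s' s'' (‖x‖ ^ 2)) :
    coordLaplacian (fun z => s (‖z‖ ^ 2) / ‖z‖ ^ 2) x =
      4 * s'' + (2 * Fintype.card ι - 8) *
        ((‖x‖ ^ 2 * s' (‖x‖ ^ 2) - s (‖x‖ ^ 2)) / (‖x‖ ^ 2) ^ 2) := by
  set t := ‖x‖ ^ 2 with ht_def
  have ht : t ≠ 0 := by positivity
  have hquot : ∀ᶠ u in 𝓝 t, HasDerivAt (fun u => s u / u) ((s' u * u - s u) / u ^ 2) u := by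
    filter_upwards [hs, eventually_ne_nhds ht] with u hsu hu
    exact (hsu.div (hasDerivAt_id u) hu).congr_deriv (by simp)
  have hquot_deriv := ((hs'.mul (hasDerivAt_id t)).sub hs.self_of_nhds).div
    (hasDerivAt_pow 2 t) (pow_ne_zero 2 ht)
  rw [coordLaplacian_comp_norm_sq (φ := fun u => s u / u) hquot hquot_deriv, ← ht_def]
  simp only [Pi.sub_apply, Pi.mul_apply, id]
  field_simp
  ring

end Laplacian

/-- For `d ≥ 4` and `s : [0,∞) → [0,∞)` twice differentiable, nonnegative
and concave, the function `x ↦ s(‖x‖²)/‖x‖²` is superharmonic away from the origin: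
its Laplacian `Σ_k ∂²g/∂x_k²` is `≤ 0` at every `x ≠ 0`. -/
theorem stmt5 (d : ℕ) (hd : 4 ≤ d)
    (s : ℝ → ℝ)
    (hs_diff : DifferentiableOn ℝ s (Ici 0))
    (hs'_diff : DifferentiableOn ℝ (derivWithin s (Ici 0)) (Ici 0))
    (hs_nonneg : ∀ t, 0 ≤ t → 0 ≤ s t)
    (hs_concave : ConcaveOn ℝ (Ici 0) s) :
    ∀ x : EuclideanSpace ℝ (Fin d), x ≠ 0 →
      (∑ k : Fin d,
        fderiv ℝ (fun y : EuclideanSpace ℝ (Fin d) =>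
            fderiv ℝ (fun z : EuclideanSpace ℝ (Fin d) => s (‖z‖ ^ 2) / ‖z‖ ^ 2) y
              (EuclideanSpace.single k (1 : ℝ))) x
          (EuclideanSpace.single k (1 : ℝ))) ≤ 0 := by
  intro x hx
  set t := ‖x‖ ^ 2
  have ht : 0 < t := by positivity
  set s' := derivWithin s (Ici 0)
  have hs : ∀ᶠ u in 𝓝 t, HasDerivAt s (s' u) u := by
    filter_upwards [Ioi_mem_nhds ht] with u hu
    exact (hs_diff u (Ioi_subset_Ici_self hu)).hasDerivWithinAt.hasDerivAt (Ici_mem_nhds hu)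
  have hs' : HasDerivAt s' (derivWithin s' (Ici 0) t) t :=
    (hs'_diff t ht.le).hasDerivWithinAt.hasDerivAt (Ici_mem_nhds ht)
  have hs''_nonpos : derivWithin s' (Ici 0) t ≤ 0 :=
    (hs_concave.antitoneOn_derivWithin hs_diff).derivWithin_nonpos
  have htangent : t * s' t - s t ≤ 0 := by
    have h := hs_concave.sub_mul_derivWithin_le self_mem_Ici ht.le ht (hs_diff t ht.le)
    rw [sub_zero] at h
    linarith [hs_nonneg 0 le_rfl]
  have hdim : (0 : ℝ) ≤ 2 * d - 8 := by
    have : (4 : ℝ) ≤ d := by exact_mod_cast hd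
    linarith
  change coordLaplacian _ x ≤ 0
  rw [coordLaplacian_div_norm_sq hx hs hs', Fintype.card_fin]
  exact add_nonpos (by linarith)
    (mul_nonpos_of_nonneg_of_nonpos hdim (div_nonpos_of_nonpos_of_nonneg htangent (by positivity)))
end

section
/- Let μ be a probability measure on (0,∞) and, for q ∈ (0,1], set M(q) = ∫ w^{q−1} dμ(w) and N(q) = ∫ w^{q−2} dμ(w). If 0 < q₁ ≤ q₂ ≤ 1 and M(q₁), N(q₁), M(q₂), N(q₂) are all finite and positive, then M(q₁)/N(q₁) ≤ M(q₂)/N(q₂); that is, the map q ↦ (∫ w^{q−1} dμ)/(∫ w^{q−2} dμ) is nondecreasing on (0,1]. Consequently, the cut-off a₀(q) = (2(d−2)/d) (∫ w^{q−1} dμ)/(∫ w^{q−2} dμ) associated with the loss ℓ(t)=t^q is nondecreasing in q. -/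
open MeasureTheory Set

lemma ptwise (w v a q : ℝ) (hw : 0 < w) (hv : 0 < v) (ha : 0 ≤ a) :
    w ^ (q - 1) * v ^ (q + a - 2) + w ^ (q + a - 2) * v ^ (q - 1) ≤
      w ^ (q + a - 1) * v ^ (q - 2) + w ^ (q - 2) * v ^ (q + a - 1) := by
  have hW2 : (0:ℝ) < w ^ (q - 2) := Real.rpow_pos_of_pos hw _
  have hV2 : (0:ℝ) < v ^ (q - 2) := Real.rpow_pos_of_pos hv _
  have ew1 : w ^ (q - 1) = w ^ (q - 2) * w := by
    rw [← Real.rpow_add_one hw.ne' (q-2)]; ring_nf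
  have ev1 : v ^ (q - 1) = v ^ (q - 2) * v := by
    rw [← Real.rpow_add_one hv.ne' (q-2)]; ring_nf
  have ew2 : w ^ (q + a - 2) = w ^ (q - 2) * w ^ a := by
    rw [← Real.rpow_add hw]; ring_nf
  have ev2 : v ^ (q + a - 2) = v ^ (q - 2) * v ^ a := by
    rw [← Real.rpow_add hv]; ring_nf
  have ew3 : w ^ (q + a - 1) = w ^ (q - 2) * w ^ a * w := by
    rw [← Real.rpow_add hw, ← Real.rpow_add_one hw.ne']; ring_nf
  have ev3 : v ^ (q + a - 1) = v ^ (q - 2) * v ^ a * v := by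
    rw [← Real.rpow_add hv, ← Real.rpow_add_one hv.ne']; ring_nf
  rw [ew1, ev1, ew2, ev2, ew3, ev3]
  have hkey : 0 ≤ (w ^ a - v ^ a) * (w - v) := by
    rcases le_total w v with h | h
    · have : w ^ a ≤ v ^ a := Real.rpow_le_rpow hw.le h ha
      nlinarith
    · have : v ^ a ≤ w ^ a := Real.rpow_le_rpow hv.le h ha
      exact mul_nonneg (by linarith) (by linarith)
  nlinarith [mul_pos hW2 hV2, mul_nonneg (mul_pos hW2 hV2).le hkey]

/-- For a probability measure `μ` on `(0,∞)`, the map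
`q ↦ (∫ w^{q-1} dμ)/(∫ w^{q-2} dμ)` is nondecreasing on `(0,1]`; consequently the cut-off
`a₀(q) = (2(d-2)/d)(∫ w^{q-1} dμ)/(∫ w^{q-2} dμ)` for the loss `ℓ(t)=t^q` is nondecreasing
in `q`. -/
theorem stmt14 (d : ℕ) (hd : 4 ≤ d)
    (μ : Measure ℝ) [IsProbabilityMeasure μ] (hμ : μ (Iic 0) = 0)
    (q₁ q₂ : ℝ) (hq₁ : 0 < q₁) (hq : q₁ ≤ q₂) (hq₂ : q₂ ≤ 1)
    (M N : ℝ → ℝ)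
    (hM : ∀ q, M q = ∫ w, w ^ (q - 1) ∂μ)
    (hN : ∀ q, N q = ∫ w, w ^ (q - 2) ∂μ)
    (hM₁ : Integrable (fun w : ℝ => w ^ (q₁ - 1)) μ)
    (hN₁ : Integrable (fun w : ℝ => w ^ (q₁ - 2)) μ)
    (hM₂ : Integrable (fun w : ℝ => w ^ (q₂ - 1)) μ)
    (hN₂ : Integrable (fun w : ℝ => w ^ (q₂ - 2)) μ)
    (hM₁pos : 0 < M q₁) (hN₁pos : 0 < N q₁) (hM₂pos : 0 < M q₂) (hN₂pos : 0 < N q₂) :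
    M q₁ / N q₁ ≤ M q₂ / N q₂
    ∧ (2 * ((d : ℝ) - 2) / d) * (M q₁ / N q₁) ≤ (2 * ((d : ℝ) - 2) / d) * (M q₂ / N q₂) := by
  set ν := μ.prod μ with hν
  -- a.e. positivity on the product
  have haeprod : ∀ᵐ z ∂ν, 0 < z.1 ∧ 0 < z.2 := by
    rw [ae_iff]
    have hsub : {z : ℝ × ℝ | ¬ (0 < z.1 ∧ 0 < z.2)} ⊆
        (Iic 0 ×ˢ (univ : Set ℝ)) ∪ ((univ : Set ℝ) ×ˢ Iic 0) := by
      intro z hz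
      simp only [mem_setOf_eq, not_and_or, not_lt] at hz
      rcases hz with h | h
      · exact Or.inl ⟨h, mem_univ _⟩
      · exact Or.inr ⟨mem_univ _, h⟩
    refine measure_mono_null hsub (measure_union_null ?_ ?_)
    · rw [hν, Measure.prod_prod, hμ, zero_mul]
    · rw [hν, Measure.prod_prod, hμ, mul_zero]
  -- integrability of the product terms
  have I1 : Integrable (fun z : ℝ × ℝ => z.1 ^ (q₂ - 1) * z.2 ^ (q₁ - 2)) ν :=
    hM₂.mul_prod hN₁
  have I2 : Integrable (fun z : ℝ × ℝ => z.1 ^ (q₁ - 2) * z.2 ^ (q₂ - 1)) ν :=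
    hN₁.mul_prod hM₂
  have I3 : Integrable (fun z : ℝ × ℝ => z.1 ^ (q₁ - 1) * z.2 ^ (q₂ - 2)) ν :=
    hM₁.mul_prod hN₂
  have I4 : Integrable (fun z : ℝ × ℝ => z.1 ^ (q₂ - 2) * z.2 ^ (q₁ - 1)) ν :=
    hN₂.mul_prod hM₁
  have hmono : ∫ z, (z.1 ^ (q₁ - 1) * z.2 ^ (q₂ - 2) + z.1 ^ (q₂ - 2) * z.2 ^ (q₁ - 1)) ∂ν ≤
      ∫ z, (z.1 ^ (q₂ - 1) * z.2 ^ (q₁ - 2) + z.1 ^ (q₁ - 2) * z.2 ^ (q₂ - 1)) ∂ν := by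
    refine integral_mono_ae (I3.add I4) (I1.add I2) ?_
    filter_upwards [haeprod] with z hz
    have := ptwise z.1 z.2 (q₂ - q₁) q₁ hz.1 hz.2 (by linarith)
    have h2 : q₁ + (q₂ - q₁) = q₂ := by ring
    rw [h2] at this
    simpa [mul_comm] using this
  rw [integral_add I3 I4, integral_add I1 I2, hν] at hmono
  rw [MeasureTheory.integral_prod_mul (fun w : ℝ => w ^ (q₁ - 1)) (fun w : ℝ => w ^ (q₂ - 2)),
    MeasureTheory.integral_prod_mul (fun w : ℝ => w ^ (q₂ - 2)) (fun w : ℝ => w ^ (q₁ - 1)),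
    MeasureTheory.integral_prod_mul (fun w : ℝ => w ^ (q₂ - 1)) (fun w : ℝ => w ^ (q₁ - 2)),
    MeasureTheory.integral_prod_mul (fun w : ℝ => w ^ (q₁ - 2)) (fun w : ℝ => w ^ (q₂ - 1))] at hmono
  rw [← hM q₁, ← hM q₂, ← hN q₁, ← hN q₂] at hmono
  have key : M q₁ / N q₁ ≤ M q₂ / N q₂ := by
    rw [div_le_div_iff₀ hN₁pos hN₂pos]
    nlinarith
  refine ⟨key, mul_le_mul_of_nonneg_left key ?_⟩
  have h4 : (4:ℝ) ≤ d := by exact_mod_cast hd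
  apply div_nonneg <;> linarith
end

section
/- Let (𝒳, 𝒜) be a measurable space, {P_θ : θ ∈ Θ} a family of probability measures on it with Θ an index set and γ : Θ → ℝ^d, and let ρ : [0,∞) → [0,∞) satisfy ρ(0) = 0. Let δ₀ : 𝒳 → ℝ^d be measurable and ω ∈ (0,1). Write R_ρ(θ,δ) = ∫ ρ(‖δ(x)−γ(θ)‖²) dP_θ(x) and R_ω(θ,δ) = ∫ [ ω ρ(‖δ(x)−δ₀(x)‖²) + (1−ω) ρ(‖δ(x)−γ(θ)‖²) ] dP_θ(x). If δ₀ is minimax under the loss ρ(‖δ−γ(θ)‖²), i.e., sup_θ R_ρ(θ, δ₀) ≤ sup_θ R_ρ(θ, δ) for every measurable estimator δ : 𝒳 → ℝ^d, then δ₀ is minimax under the balanced loss, i.e., sup_θ R_ω(θ, δ₀) ≤ sup_θ R_ω(θ, δ) for every measurable estimator δ. -/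
open MeasureTheory Set

/-- If `δ₀` is minimax for estimating `γ(θ)` under the loss
`ρ(‖δ-γ(θ)‖²)`, then for any `ω ∈ (0,1)` it is also minimax under the balanced loss
`ωρ(‖δ-δ₀(x)‖²) + (1-ω)ρ(‖δ-γ(θ)‖²)` with target `δ₀`. -/
theorem stmt18 {𝒳 : Type*} [MeasurableSpace 𝒳] {Θ : Type*} (d : ℕ)
    (P : Θ → Measure 𝒳) (hP : ∀ θ, IsProbabilityMeasure (P θ))
    (γ : Θ → EuclideanSpace ℝ (Fin d))
    (ρ : ℝ → ℝ) (hρ0 : ρ 0 = 0) (hρ_nonneg : ∀ t, 0 ≤ t → 0 ≤ ρ t)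
    (δ₀ : 𝒳 → EuclideanSpace ℝ (Fin d)) (hδ₀ : Measurable δ₀)
    (ω : ℝ) (hω : ω ∈ Ioo (0 : ℝ) 1)
    (hminimax : ∀ δ : 𝒳 → EuclideanSpace ℝ (Fin d), Measurable δ →
      (⨆ θ, ∫⁻ x, ENNReal.ofReal (ρ (‖δ₀ x - γ θ‖ ^ 2)) ∂(P θ))
        ≤ ⨆ θ, ∫⁻ x, ENNReal.ofReal (ρ (‖δ x - γ θ‖ ^ 2)) ∂(P θ)) :
    ∀ δ : 𝒳 → EuclideanSpace ℝ (Fin d), Measurable δ →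
      (⨆ θ, ∫⁻ x, ENNReal.ofReal
          (ω * ρ (‖δ₀ x - δ₀ x‖ ^ 2) + (1 - ω) * ρ (‖δ₀ x - γ θ‖ ^ 2)) ∂(P θ))
        ≤ ⨆ θ, ∫⁻ x, ENNReal.ofReal
            (ω * ρ (‖δ x - δ₀ x‖ ^ 2) + (1 - ω) * ρ (‖δ x - γ θ‖ ^ 2)) ∂(P θ) := by
  intro δ hδ
  obtain ⟨hω0, hω1⟩ := hω
  have h1ω : (0:ℝ) ≤ 1 - ω := by linarith
  -- LHS simplifies: ‖δ₀ x - δ₀ x‖ = 0, ρ 0 = 0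
  have hLHS : ∀ θ, ∫⁻ x, ENNReal.ofReal
      (ω * ρ (‖δ₀ x - δ₀ x‖ ^ 2) + (1 - ω) * ρ (‖δ₀ x - γ θ‖ ^ 2)) ∂(P θ)
      = ENNReal.ofReal (1 - ω) * ∫⁻ x, ENNReal.ofReal (ρ (‖δ₀ x - γ θ‖ ^ 2)) ∂(P θ) := by
    intro θ
    rw [← lintegral_const_mul' _ _ ENNReal.ofReal_ne_top]
    congr 1 with x
    rw [sub_self, norm_zero, zero_pow (by norm_num), hρ0, mul_zero, zero_add,
      ENNReal.ofReal_mul h1ω]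
  calc (⨆ θ, ∫⁻ x, ENNReal.ofReal
          (ω * ρ (‖δ₀ x - δ₀ x‖ ^ 2) + (1 - ω) * ρ (‖δ₀ x - γ θ‖ ^ 2)) ∂(P θ))
      = ENNReal.ofReal (1 - ω) *
          ⨆ θ, ∫⁻ x, ENNReal.ofReal (ρ (‖δ₀ x - γ θ‖ ^ 2)) ∂(P θ) := by
        rw [ENNReal.mul_iSup]; exact iSup_congr hLHS
    _ ≤ ENNReal.ofReal (1 - ω) *
          ⨆ θ, ∫⁻ x, ENNReal.ofReal (ρ (‖δ x - γ θ‖ ^ 2)) ∂(P θ) :=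
        mul_le_mul_right (hminimax δ hδ) _
    _ ≤ ⨆ θ, ∫⁻ x, ENNReal.ofReal
            (ω * ρ (‖δ x - δ₀ x‖ ^ 2) + (1 - ω) * ρ (‖δ x - γ θ‖ ^ 2)) ∂(P θ) := by
        rw [ENNReal.mul_iSup]
        refine iSup_mono fun θ => ?_
        rw [← lintegral_const_mul' _ _ ENNReal.ofReal_ne_top]
        refine lintegral_mono fun x => ?_
        rw [← ENNReal.ofReal_mul h1ω]
        refine ENNReal.ofReal_le_ofReal ?_
        have := hρ_nonneg _ (sq_nonneg ‖δ x - δ₀ x‖)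
        nlinarith
end

section
/- Let d ≥ 2 be an integer, θ ∈ ℝ^d with θ ≠ 0, set λ = ‖θ‖, and let X have Lebesgue density x ↦ f(‖x−θ‖²) on ℝ^d. Let ρ : [0,∞) → [0,∞) be measurable, ω ∈ [0,1), and h : (0,∞) → ℝ be measurable, and consider the orthogonally equivariant estimator δ(x) = h(‖x‖²) x. Then, provided the risk is finite, ∫_{ℝ^d} [ ω ρ(‖δ(x)−x‖²) + (1−ω) ρ(‖δ(x)−θ‖²) ] f(‖x−θ‖²) dx = ∫_0^∞ ∫_{−1}^{1} [ ω ρ( (h(w)−1)² w ) + (1−ω) ρ( λ² + h(w)² w − 2 λ t w^{1/2} h(w) ) ] ψ(t,w) dt dw, where ψ(t,w) = (π^{(d−1)/2}/Γ((d−1)/2)) w^{d/2−1} (1−t²)^{(d−3)/2} f( w + λ² − 2λ t w^{1/2} ). In particular the risk depends on θ only through λ = ‖θ‖. -/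
/-!
Writing `w = ‖x‖²` and `p = ⟪θ, x⟫`, the loss and the density are functions of `(w, p)`:
`‖h(w)x - x‖² = (h(w) - 1)² w`, `‖h(w)x - θ‖² = λ² + h(w)² w - 2 p h(w)` and
`‖x - θ‖² = w + λ² - 2p`. A reflection sending `θ` to `λ e₀` turns `p` into `λ x₀`.
Splitting `x = (x₀, z)` and using polar coordinates in `z ∈ ℝ^{d-1}` leaves an integral over the
upper half-plane of `(x₀, ‖z‖)` against `(d-1) vol(B^{d-1}) ‖z‖^{d-2}`; the substitution
`x₀ = √w t`, `‖z‖ = √w √(1 - t²)`, with Jacobian `1 / (2√(1 - t²))`, turns it into the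
`(w, t)`-integral of the loss against `ψ`. Since the integrand is nonnegative, all of this can be done with
lower Lebesgue integrals, and finiteness of the risk makes the real integrals agree.
-/

open MeasureTheory Set Metric
open scoped ENNReal RealInnerProductSpace

lemma one_sub_sq_pos_of_mem_Ioo {t : ℝ} (ht : t ∈ Ioo (-1 : ℝ) 1) : 0 < 1 - t ^ 2 := by
  nlinarith [ht.1, ht.2]

theorem lintegral_comp_norm_sq_inner_eq_of_norm_eq {E : Type*} [NormedAddCommGroup E]
    [InnerProductSpace ℝ E] [FiniteDimensional ℝ E] [MeasurableSpace E] [BorelSpace E]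
    {u v : E} (huv : ‖u‖ = ‖v‖) (g : ℝ × ℝ → ℝ≥0∞) :
    ∫⁻ x, g (‖x‖ ^ 2, ⟪u, x⟫) = ∫⁻ x, g (‖x‖ ^ 2, ⟪v, x⟫) := by
  set R := (ℝ ∙ (u - v))ᗮ.reflection
  have hR : ∀ x, ⟪u, x⟫ = ⟪v, R x⟫ := fun x => by
    rw [← Submodule.reflection_sub huv, LinearIsometryEquiv.inner_map_map]
  calc ∫⁻ x, g (‖x‖ ^ 2, ⟪u, x⟫) = ∫⁻ x, g (‖R x‖ ^ 2, ⟪v, R x⟫) := by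
        simp_rw [hR, R.norm_map]
    _ = ∫⁻ x, g (‖x‖ ^ 2, ⟪v, x⟫) :=
      R.measurePreserving.lintegral_comp_emb R.toHomeomorph.measurableEmbedding
        fun y => g (‖y‖ ^ 2, ⟪v, y⟫)

theorem lintegral_comp_norm_sq_apply_zero_eq_lintegral_lintegral {m : ℕ} {g : ℝ × ℝ → ℝ≥0∞}
    (hg : Measurable g) :
    ∫⁻ x : EuclideanSpace ℝ (Fin (m + 1)), g (‖x‖ ^ 2, x 0)
      = ∫⁻ a, ∫⁻ z : EuclideanSpace ℝ (Fin m), g (a ^ 2 + ‖z‖ ^ 2, a) := by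
  rw [← (PiLp.volume_preserving_toLp (Fin (m + 1))).lintegral_comp_emb
      (MeasurableEquiv.toLp 2 _).measurableEmbedding,
    ← ((volume_preserving_piFinSuccAbove (fun _ => ℝ) 0).symm _).lintegral_comp_emb
      (MeasurableEquiv.measurableEmbedding _), Measure.volume_eq_prod,
    lintegral_prod _ (by fun_prop)]
  congr with a
  rw [← (PiLp.volume_preserving_toLp (Fin m)).lintegral_comp_emb
      (MeasurableEquiv.toLp 2 _).measurableEmbedding]
  simp [EuclideanSpace.norm_sq_eq, Fin.sum_univ_succ]

theorem lintegral_fun_norm_addHaar {E : Type*} [NormedAddCommGroup E] [NormedSpace ℝ E]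
    [MeasurableSpace E] [BorelSpace E] [FiniteDimensional ℝ E] [Nontrivial E]
    (μ : Measure E) [μ.IsAddHaarMeasure] {g : ℝ → ℝ≥0∞} (hg : Measurable g) :
    ∫⁻ x, g ‖x‖ ∂μ = Module.finrank ℝ E * μ (ball 0 1) *
      ∫⁻ y in Ioi 0, ENNReal.ofReal (y ^ (Module.finrank ℝ E - 1)) * g y := by
  calc ∫⁻ x, g ‖x‖ ∂μ = ∫⁻ x : ({(0)}ᶜ : Set E), g ‖x.1‖ ∂(μ.comap (↑)) := by
        rw [lintegral_subtype_comap (measurableSet_singleton 0).compl (fun x => g ‖x‖),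
          restrict_compl_singleton]
    _ = ∫⁻ p, g p.2.1 ∂μ.toSphere.prod (.volumeIoiPow (Module.finrank ℝ E - 1)) := by
        simpa using μ.measurePreserving_homeomorphUnitSphereProd.lintegral_comp_emb
          (Homeomorph.measurableEmbedding _) (fun p => g p.2.1)
    _ = μ.toSphere univ * ∫⁻ r, g r.1 ∂(.volumeIoiPow (Module.finrank ℝ E - 1)) := by
        rw [lintegral_prod _ (by fun_prop)]
        simp [lintegral_const, mul_comm]
    _ = _ := by
        rw [Measure.volumeIoiPow, lintegral_withDensity_eq_lintegral_mul _ (by fun_prop)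
          (by fun_prop), Measure.toSphere_apply_univ]
        exact congrArg _ (lintegral_subtype_comap measurableSet_Ioi
          (fun y => ENNReal.ofReal (y ^ (Module.finrank ℝ E - 1)) * g y))

noncomputable def halfPlaneParam (q : ℝ × ℝ) : ℝ × ℝ :=
  (√q.1 * q.2, √q.1 * √(1 - q.2 ^ 2))

noncomputable def fderivHalfPlaneParam (q : ℝ × ℝ) : ℝ × ℝ →L[ℝ] ℝ × ℝ :=
  (Matrix.toLin (.finTwoProd ℝ) (.finTwoProd ℝ)
    !![q.2 / (2 * √q.1), √q.1;
      √(1 - q.2 ^ 2) / (2 * √q.1), -(√q.1 * q.2) / √(1 - q.2 ^ 2)])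
    |>.toContinuousLinearMap

theorem hasFDerivAt_halfPlaneParam {q : ℝ × ℝ} (hw : 0 < q.1) (ht : q.2 ∈ Ioo (-1 : ℝ) 1) :
    HasFDerivAt halfPlaneParam (fderivHalfPlaneParam q) q := by
  have hs : HasFDerivAt (fun p : ℝ × ℝ => √(1 - p.2 ^ 2))
      ((1 / (2 * √(1 - q.2 ^ 2))) • -((2 * q.2) • ContinuousLinearMap.snd ℝ ℝ ℝ)) q :=
    (Real.hasDerivAt_sqrt (one_sub_sq_pos_of_mem_Ioo ht).ne').comp_hasFDerivAt q
      (by simpa using ((hasFDerivAt_snd (𝕜 := ℝ) (p := q)).pow 2).const_sub (1 : ℝ))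
  have hr := (Real.hasDerivAt_sqrt hw.ne').comp_hasFDerivAt q (hasFDerivAt_fst (𝕜 := ℝ))
  unfold fderivHalfPlaneParam
  rw [Matrix.toLin_finTwoProd_toContinuousLinearMap]
  refine ((hr.mul (hasFDerivAt_snd (𝕜 := ℝ) (p := q))).prodMk (hr.mul hs)).congr_fderiv ?_
  ext <;> simp <;> field_simp

theorem det_fderivHalfPlaneParam {q : ℝ × ℝ} (hw : 0 < q.1) (ht : q.2 ∈ Ioo (-1 : ℝ) 1) :
    (fderivHalfPlaneParam q).det = -(1 / (2 * √(1 - q.2 ^ 2))) := by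
  have h := Real.sq_sqrt (one_sub_sq_pos_of_mem_Ioo ht).le
  have := Real.sqrt_pos.2 hw
  have := Real.sqrt_pos.2 (one_sub_sq_pos_of_mem_Ioo ht)
  simp only [fderivHalfPlaneParam, LinearMap.det_toContinuousLinearMap, LinearMap.det_toLin,
    Matrix.det_fin_two_of]
  field_simp
  linear_combination -h

theorem halfPlaneParam_fst_sq_add_snd_sq {q : ℝ × ℝ} (hw : 0 < q.1)
    (ht : q.2 ∈ Ioo (-1 : ℝ) 1) :
    (halfPlaneParam q).1 ^ 2 + (halfPlaneParam q).2 ^ 2 = q.1 := by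
  simp only [halfPlaneParam, mul_pow, Real.sq_sqrt hw.le,
    Real.sq_sqrt (one_sub_sq_pos_of_mem_Ioo ht).le]
  ring

theorem injOn_halfPlaneParam : InjOn halfPlaneParam (Ioi 0 ×ˢ Ioo (-1) 1) := by
  rintro ⟨w, t⟩ ⟨hw, ht⟩ ⟨w', t'⟩ ⟨hw', ht'⟩ heq
  have hww' : w = w' := by
    have h := halfPlaneParam_fst_sq_add_snd_sq (q := (w, t)) hw ht
    rw [heq, halfPlaneParam_fst_sq_add_snd_sq (q := (w', t')) hw' ht'] at h
    exact h.symm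
  subst hww'
  have htt' := congrArg Prod.fst heq
  simp only [halfPlaneParam] at htt'
  rw [mul_left_cancel₀ (Real.sqrt_pos.2 hw).ne' htt']

theorem image_halfPlaneParam :
    halfPlaneParam '' (Ioi 0 ×ˢ Ioo (-1) 1) = univ ×ˢ Ioi 0 := by
  ext ⟨a, b⟩
  simp only [mem_image, mem_prod, mem_univ, true_and, mem_Ioi, Prod.exists]
  constructor
  · rintro ⟨w, t, ⟨hw, ht⟩, h⟩
    obtain rfl := congrArg Prod.snd h
    exact mul_pos (Real.sqrt_pos.2 hw) (Real.sqrt_pos.2 (one_sub_sq_pos_of_mem_Ioo ht))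
  · intro hb
    set r := √(a ^ 2 + b ^ 2)
    have hr : 0 < r := Real.sqrt_pos.2 (by positivity)
    have hr2 : r ^ 2 = a ^ 2 + b ^ 2 := Real.sq_sqrt (by positivity)
    have hat : |a| < r := (Real.lt_sqrt (abs_nonneg a)).2 (by rw [sq_abs]; nlinarith)
    refine ⟨r ^ 2, a / r, ⟨by positivity, ?_⟩, ?_⟩
    · rw [mem_Ioo, lt_div_iff₀ hr, div_lt_one hr]
      constructor <;> linarith [abs_lt.1 hat]
    · have : 1 - (a / r) ^ 2 = (b / r) ^ 2 := by field_simp; linarith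
      simp only [halfPlaneParam, Real.sqrt_sq hr.le, this, Real.sqrt_sq (div_pos hb hr).le]
      simp [mul_div_cancel₀, hr.ne']

theorem setLIntegral_comp_halfPlaneParam (g : ℝ × ℝ → ℝ≥0∞) :
    ∫⁻ q in Ioi 0 ×ˢ Ioo (-1) 1,
        ENNReal.ofReal (1 / (2 * √(1 - q.2 ^ 2))) * g (halfPlaneParam q)
      = ∫⁻ p in univ ×ˢ Ioi 0, g p := by
  have hS : MeasurableSet (Ioi (0 : ℝ) ×ˢ Ioo (-1 : ℝ) 1) :=
    measurableSet_Ioi.prod measurableSet_Ioo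
  rw [← image_halfPlaneParam, lintegral_image_eq_lintegral_abs_det_fderiv_mul volume hS
    (fun q hq => (hasFDerivAt_halfPlaneParam hq.1 hq.2).hasFDerivWithinAt)
    injOn_halfPlaneParam g]
  refine setLIntegral_congr_fun hS fun q ⟨hw, ht⟩ => ?_
  have := Real.sqrt_pos.2 (one_sub_sq_pos_of_mem_Ioo ht)
  rw [det_fderivHalfPlaneParam hw ht, abs_neg, abs_of_pos (by positivity)]

/-- Density of the image of Lebesgue measure on `ℝ^d` under `x ↦ (‖x‖², x₀ / ‖x‖)`. -/
noncomputable def normSqCosDensity (d : ℕ) (w t : ℝ) : ℝ :=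
  Real.pi ^ (((d : ℝ) - 1) / 2) / Real.Gamma (((d : ℝ) - 1) / 2)
    * w ^ ((d : ℝ) / 2 - 1) * (1 - t ^ 2) ^ (((d : ℝ) - 3) / 2)

theorem normSqCosDensity_nonneg {d : ℕ} (hd : 1 ≤ d) {w t : ℝ} (hw : 0 ≤ w)
    (ht : t ∈ Ioo (-1 : ℝ) 1) : 0 ≤ normSqCosDensity d w t := by
  have hd' : (1 : ℝ) ≤ d := by exact_mod_cast hd
  have hΓ : 0 ≤ Real.Gamma (((d : ℝ) - 1) / 2) := Real.Gamma_nonneg_of_nonneg (by linarith)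
  have := (one_sub_sq_pos_of_mem_Ioo ht).le
  unfold normSqCosDensity
  positivity

theorem normSqCosDensity_succ_eq {m : ℕ} (hm : 1 ≤ m) {w t : ℝ} (hw : 0 < w)
    (ht : t ∈ Ioo (-1 : ℝ) 1) :
    m * (√Real.pi ^ m / Real.Gamma (m / 2 + 1)) * (1 / (2 * √(1 - t ^ 2)))
      * (√w * √(1 - t ^ 2)) ^ (m - 1) = normSqCosDensity (m + 1) w t := by
  have h1t := one_sub_sq_pos_of_mem_Ioo ht
  have hm0 : (0 : ℝ) < m := by exact_mod_cast hm
  have hΓ : 0 < Real.Gamma (m / 2) := Real.Gamma_pos_of_pos (by positivity)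
  have hsqrt_pow : ∀ x : ℝ, 0 < x → √x ^ (m - 1) = x ^ (((m : ℝ) - 1) / 2) := fun x hx => by
    rw [Real.sqrt_eq_rpow, ← Real.rpow_natCast, ← Real.rpow_mul hx.le, Nat.cast_sub hm]
    ring_nf
  have hpi : √Real.pi ^ m = Real.pi ^ ((m : ℝ) / 2) := by
    rw [Real.sqrt_eq_rpow, ← Real.rpow_natCast, ← Real.rpow_mul Real.pi_pos.le]
    ring_nf
  have hsplit : (1 - t ^ 2) ^ (((m : ℝ) - 1) / 2)
      = (1 - t ^ 2) ^ (((m : ℝ) - 2) / 2) * √(1 - t ^ 2) := by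
    rw [Real.sqrt_eq_rpow, ← Real.rpow_add h1t]
    ring_nf
  have hexp : (((m + 1 : ℕ) : ℝ) - 1) / 2 = m / 2
      ∧ ((m + 1 : ℕ) : ℝ) / 2 - 1 = ((m : ℝ) - 1) / 2
      ∧ (((m + 1 : ℕ) : ℝ) - 3) / 2 = ((m : ℝ) - 2) / 2 := by
    push_cast; refine ⟨?_, ?_, ?_⟩ <;> ring
  have := Real.sqrt_pos.2 h1t
  rw [normSqCosDensity, hexp.1, hexp.2.1, hexp.2.2, mul_pow, hsqrt_pow w hw, hsqrt_pow _ h1t,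
    hpi, Real.Gamma_add_one (by positivity), hsplit]
  field_simp

theorem lintegral_comp_norm_sq_apply_zero {m : ℕ} (hm : 1 ≤ m) {g : ℝ × ℝ → ℝ≥0∞}
    (hg : Measurable g) :
    ∫⁻ x : EuclideanSpace ℝ (Fin (m + 1)), g (‖x‖ ^ 2, x 0)
      = ∫⁻ q in Ioi 0 ×ˢ Ioo (-1) 1,
          ENNReal.ofReal (normSqCosDensity (m + 1) q.1 q.2) * g (q.1, √q.1 * q.2) := by
  have : Nonempty (Fin m) := ⟨⟨0, hm⟩⟩
  have hC : (m : ℝ≥0∞) * volume (ball (0 : EuclideanSpace ℝ (Fin m)) 1)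
      = ENNReal.ofReal (m * (√Real.pi ^ m / Real.Gamma (m / 2 + 1))) := by
    rw [EuclideanSpace.volume_ball, Fintype.card_fin, ENNReal.ofReal_one, one_pow, one_mul,
      ENNReal.ofReal_mul (by positivity), ENNReal.ofReal_natCast]
  set C : ℝ≥0∞ := m * volume (ball (0 : EuclideanSpace ℝ (Fin m)) 1)
  have hC_ne_top : C ≠ ⊤ := hC ▸ ENNReal.ofReal_ne_top
  have hS : MeasurableSet (Ioi (0 : ℝ) ×ˢ Ioo (-1 : ℝ) 1) :=
    measurableSet_Ioi.prod measurableSet_Ioo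
  calc ∫⁻ x : EuclideanSpace ℝ (Fin (m + 1)), g (‖x‖ ^ 2, x 0)
      = ∫⁻ a, ∫⁻ z : EuclideanSpace ℝ (Fin m), g (a ^ 2 + ‖z‖ ^ 2, a) :=
        lintegral_comp_norm_sq_apply_zero_eq_lintegral_lintegral hg
    _ = ∫⁻ a, C * ∫⁻ s in Ioi 0, ENNReal.ofReal (s ^ (m - 1)) * g (a ^ 2 + s ^ 2, a) := by
        congr with a
        rw [lintegral_fun_norm_addHaar volume (g := fun s => g (a ^ 2 + s ^ 2, a))
          (by fun_prop), finrank_euclideanSpace_fin]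
    _ = C * ∫⁻ p in univ ×ˢ Ioi 0,
          ENNReal.ofReal (p.2 ^ (m - 1)) * g (p.1 ^ 2 + p.2 ^ 2, p.1) := by
        rw [lintegral_const_mul' _ _ hC_ne_top, Measure.volume_eq_prod, ← Measure.prod_restrict,
          Measure.restrict_univ, lintegral_prod _ (by fun_prop)]
    _ = C * ∫⁻ q in Ioi 0 ×ˢ Ioo (-1) 1, ENNReal.ofReal (1 / (2 * √(1 - q.2 ^ 2)))
          * (ENNReal.ofReal ((√q.1 * √(1 - q.2 ^ 2)) ^ (m - 1)) * g (q.1, √q.1 * q.2)) := by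
        rw [← setLIntegral_comp_halfPlaneParam]
        refine congrArg _ (setLIntegral_congr_fun hS fun q hq => ?_)
        rw [halfPlaneParam_fst_sq_add_snd_sq hq.1 hq.2]
        rfl
    _ = _ := by
        rw [← lintegral_const_mul' _ _ hC_ne_top]
        refine setLIntegral_congr_fun hS fun q ⟨hw, ht⟩ => ?_
        have := (one_sub_sq_pos_of_mem_Ioo ht).le
        rw [hC, ← normSqCosDensity_succ_eq hm hw ht, ← mul_assoc, ← mul_assoc,
          ← ENNReal.ofReal_mul (by positivity), ← ENNReal.ofReal_mul (by positivity)]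

theorem lintegral_comp_norm_sq_inner {d : ℕ} (hd : 2 ≤ d) (θ : EuclideanSpace ℝ (Fin d))
    {g : ℝ × ℝ → ℝ≥0∞} (hg : Measurable g) :
    ∫⁻ x, g (‖x‖ ^ 2, ⟪θ, x⟫)
      = ∫⁻ q in Ioi 0 ×ˢ Ioo (-1) 1,
          ENNReal.ofReal (normSqCosDensity d q.1 q.2) * g (q.1, ‖θ‖ * (√q.1 * q.2)) := by
  obtain ⟨m, rfl⟩ : ∃ m, d = m + 1 := ⟨d - 1, by omega⟩
  set e₀ : EuclideanSpace ℝ (Fin (m + 1)) := EuclideanSpace.single 0 1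
  have he₀ : ∀ x : EuclideanSpace ℝ (Fin (m + 1)), ⟪‖θ‖ • e₀, x⟫ = ‖θ‖ * x 0 := fun x => by
    simp [e₀, real_inner_smul_left, EuclideanSpace.inner_single_left]
  rw [lintegral_comp_norm_sq_inner_eq_of_norm_eq (v := ‖θ‖ • e₀)
    (by simp [e₀, norm_smul])]
  simp_rw [he₀]
  exact lintegral_comp_norm_sq_apply_zero (by omega) (g := fun p => g (p.1, ‖θ‖ * p.2))
    (by fun_prop)

theorem integral_comp_norm_sq_inner {d : ℕ} (hd : 2 ≤ d) (θ : EuclideanSpace ℝ (Fin d))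
    {G : ℝ × ℝ → ℝ} (hG : Measurable G)
    (hG_nonneg : ∀ w p, 0 ≤ w → p ^ 2 ≤ ‖θ‖ ^ 2 * w → 0 ≤ G (w, p))
    (hG_int : Integrable fun x : EuclideanSpace ℝ (Fin d) => G (‖x‖ ^ 2, ⟪θ, x⟫)) :
    ∫ x, G (‖x‖ ^ 2, ⟪θ, x⟫)
      = ∫ w in Ioi 0, ∫ t in Ioo (-1) 1, normSqCosDensity d w t * G (w, ‖θ‖ * (√w * t)) := by
  set ψ : ℝ × ℝ → ℝ := fun q => normSqCosDensity d q.1 q.2 * G (q.1, ‖θ‖ * (√q.1 * q.2))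
    with hψ
  have hS : MeasurableSet (Ioi (0 : ℝ) ×ˢ Ioo (-1 : ℝ) 1) :=
    measurableSet_Ioi.prod measurableSet_Ioo
  have hψ_nonneg : ∀ q ∈ Ioi (0 : ℝ) ×ˢ Ioo (-1 : ℝ) 1, 0 ≤ ψ q := fun q ⟨hw, ht⟩ => by
    refine mul_nonneg (normSqCosDensity_nonneg (by omega) (le_of_lt hw) ht)
      (hG_nonneg _ _ (le_of_lt hw) ?_)
    rw [mul_pow, mul_pow, Real.sq_sqrt (le_of_lt hw)]
    nlinarith [mul_nonneg (mul_nonneg (sq_nonneg ‖θ‖) (le_of_lt hw))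
      (one_sub_sq_pos_of_mem_Ioo ht).le]
  have hF_nonneg : 0 ≤ᵐ[volume] fun x : EuclideanSpace ℝ (Fin d) => G (‖x‖ ^ 2, ⟪θ, x⟫) :=
    ae_of_all _ fun x => hG_nonneg _ _ (sq_nonneg _) (by
      rw [← mul_pow, ← sq_abs]
      exact pow_le_pow_left₀ (abs_nonneg _) (abs_real_inner_le_norm θ x) 2)
  have hlintegral : ∫⁻ x, ENNReal.ofReal (G (‖x‖ ^ 2, ⟪θ, x⟫))
      = ∫⁻ q in Ioi 0 ×ˢ Ioo (-1) 1, ENNReal.ofReal (ψ q) := by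
    rw [lintegral_comp_norm_sq_inner hd θ (g := fun p => ENNReal.ofReal (G p)) (by fun_prop)]
    refine setLIntegral_congr_fun hS fun q ⟨hw, ht⟩ => ?_
    rw [ENNReal.ofReal_mul (normSqCosDensity_nonneg (by omega) (le_of_lt hw) ht)]
  have hψ_int : IntegrableOn ψ (Ioi 0 ×ˢ Ioo (-1) 1) := by
    have hψ_meas : Measurable ψ := by rw [hψ]; unfold normSqCosDensity; fun_prop
    refine ⟨hψ_meas.aestronglyMeasurable, ?_⟩
    rw [hasFiniteIntegral_iff_ofReal (ae_restrict_of_forall_mem hS hψ_nonneg), ← hlintegral]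
    exact (hasFiniteIntegral_iff_ofReal hF_nonneg).1 hG_int.2
  calc ∫ x, G (‖x‖ ^ 2, ⟪θ, x⟫)
      = (∫⁻ x, ENNReal.ofReal (G (‖x‖ ^ 2, ⟪θ, x⟫))).toReal :=
        integral_eq_lintegral_of_nonneg_ae hF_nonneg hG_int.1
    _ = ∫ q in Ioi 0 ×ˢ Ioo (-1) 1, ψ q := by
        rw [hlintegral, integral_eq_lintegral_of_nonneg_ae
          (ae_restrict_of_forall_mem hS hψ_nonneg) hψ_int.1]
    _ = _ := by
        rw [Measure.volume_eq_prod]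
        exact setIntegral_prod ψ hψ_int

theorem two_mul_mul_le_of_sq_le {l p w : ℝ} (hw : 0 ≤ w) (hp : p ^ 2 ≤ l ^ 2 * w) (c : ℝ) :
    2 * p * c ≤ l ^ 2 + c ^ 2 * w := by
  have hsq : (2 * p * c) ^ 2 ≤ (l ^ 2 + c ^ 2 * w) ^ 2 := by
    nlinarith [sq_nonneg (l ^ 2 - c ^ 2 * w), mul_le_mul_of_nonneg_right hp (sq_nonneg c)]
  exact (abs_le_of_sq_le_sq' hsq (by positivity)).2

theorem stmt19_general (d : ℕ) (hd : 2 ≤ d) (θ : EuclideanSpace ℝ (Fin d))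
    (f : ℝ → ℝ) (hf_meas : Measurable f) (hf_nonneg : ∀ t, 0 ≤ t → 0 ≤ f t)
    (ρ : ℝ → ℝ) (hρ_meas : Measurable ρ) (hρ_nonneg : ∀ t, 0 ≤ t → 0 ≤ ρ t)
    (ω : ℝ) (hω0 : 0 ≤ ω) (hω1 : ω < 1)
    (h : ℝ → ℝ) (hh_meas : Measurable h)
    (hrisk : Integrable (fun x : EuclideanSpace ℝ (Fin d) =>
      (ω * ρ (‖h (‖x‖ ^ 2) • x - x‖ ^ 2) + (1 - ω) * ρ (‖h (‖x‖ ^ 2) • x - θ‖ ^ 2))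
        * f (‖x - θ‖ ^ 2))) :
    (∫ x : EuclideanSpace ℝ (Fin d),
        (ω * ρ (‖h (‖x‖ ^ 2) • x - x‖ ^ 2) + (1 - ω) * ρ (‖h (‖x‖ ^ 2) • x - θ‖ ^ 2))
          * f (‖x - θ‖ ^ 2))
      = ∫ w in Ioi (0 : ℝ), ∫ t in Ioo (-1 : ℝ) 1,
          (ω * ρ ((h w - 1) ^ 2 * w)
            + (1 - ω) * ρ (‖θ‖ ^ 2 + (h w) ^ 2 * w - 2 * ‖θ‖ * t * Real.sqrt w * h w))
          * (Real.pi ^ (((d : ℝ) - 1) / 2) / Real.Gamma (((d : ℝ) - 1) / 2)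
              * w ^ ((d : ℝ) / 2 - 1) * (1 - t ^ 2) ^ (((d : ℝ) - 3) / 2)
              * f (w + ‖θ‖ ^ 2 - 2 * ‖θ‖ * t * Real.sqrt w)) := by
  set G : ℝ × ℝ → ℝ := fun q => (ω * ρ ((h q.1 - 1) ^ 2 * q.1)
    + (1 - ω) * ρ (‖θ‖ ^ 2 + h q.1 ^ 2 * q.1 - 2 * q.2 * h q.1)) * f (q.1 + ‖θ‖ ^ 2 - 2 * q.2)
  have hF : ∀ x : EuclideanSpace ℝ (Fin d),
      (ω * ρ (‖h (‖x‖ ^ 2) • x - x‖ ^ 2) + (1 - ω) * ρ (‖h (‖x‖ ^ 2) • x - θ‖ ^ 2))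
        * f (‖x - θ‖ ^ 2) = G (‖x‖ ^ 2, ⟪θ, x⟫) := fun x => by
    have h₁ : h (‖x‖ ^ 2) • x - x = (h (‖x‖ ^ 2) - 1) • x := by rw [sub_smul, one_smul]
    simp only [G, h₁, norm_sub_sq_real, norm_smul, real_inner_smul_left, real_inner_comm x θ,
      Real.norm_eq_abs, mul_pow, sq_abs]
    ring_nf
  have hG_nonneg : ∀ w p, 0 ≤ w → p ^ 2 ≤ ‖θ‖ ^ 2 * w → 0 ≤ G (w, p) := fun w p hw hp => by
    have := two_mul_mul_le_of_sq_le hw hp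
    exact mul_nonneg (add_nonneg (mul_nonneg hω0 (hρ_nonneg _ (by positivity)))
      (mul_nonneg (by linarith) (hρ_nonneg _ (by linarith [this (h w)]))))
      (hf_nonneg _ (by linarith [this 1]))
  simp_rw [hF] at hrisk ⊢
  rw [integral_comp_norm_sq_inner hd θ (by unfold G; fun_prop) hG_nonneg hrisk]
  refine setIntegral_congr_fun measurableSet_Ioi fun w _ =>
    setIntegral_congr_fun measurableSet_Ioo fun t _ => ?_
  simp only [G, normSqCosDensity]
  ring_nf

/-- Dimension reduction of the balanced risk for orthogonally equivariant
estimators `δ(x) = h(‖x‖²)x` under a spherically symmetric model: the risk equals a double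
integral against the joint density `ψ(t,w)` of `T = (θ·X)/(λ‖X‖)` and `W = ‖X‖²`, and hence
depends on `θ` only through `λ = ‖θ‖`. -/
theorem stmt19 (d : ℕ) (hd : 2 ≤ d) (θ : EuclideanSpace ℝ (Fin d)) (hθ : θ ≠ 0)
    (f : ℝ → ℝ) (hf_meas : Measurable f) (hf_nonneg : ∀ t, 0 ≤ t → 0 ≤ f t)
    (hf_prob : (∫ x : EuclideanSpace ℝ (Fin d), f (‖x‖ ^ 2)) = 1)
    (ρ : ℝ → ℝ) (hρ_meas : Measurable ρ) (hρ_nonneg : ∀ t, 0 ≤ t → 0 ≤ ρ t)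
    (ω : ℝ) (hω0 : 0 ≤ ω) (hω1 : ω < 1)
    (h : ℝ → ℝ) (hh_meas : Measurable h)
    (hrisk : Integrable (fun x : EuclideanSpace ℝ (Fin d) =>
      (ω * ρ (‖h (‖x‖ ^ 2) • x - x‖ ^ 2) + (1 - ω) * ρ (‖h (‖x‖ ^ 2) • x - θ‖ ^ 2))
        * f (‖x - θ‖ ^ 2))) :
    (∫ x : EuclideanSpace ℝ (Fin d),
        (ω * ρ (‖h (‖x‖ ^ 2) • x - x‖ ^ 2) + (1 - ω) * ρ (‖h (‖x‖ ^ 2) • x - θ‖ ^ 2))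
          * f (‖x - θ‖ ^ 2))
      = ∫ w in Ioi (0 : ℝ), ∫ t in Ioo (-1 : ℝ) 1,
          (ω * ρ ((h w - 1) ^ 2 * w)
            + (1 - ω) * ρ (‖θ‖ ^ 2 + (h w) ^ 2 * w - 2 * ‖θ‖ * t * Real.sqrt w * h w))
          * (Real.pi ^ (((d : ℝ) - 1) / 2) / Real.Gamma (((d : ℝ) - 1) / 2)
              * w ^ ((d : ℝ) / 2 - 1) * (1 - t ^ 2) ^ (((d : ℝ) - 3) / 2)
              * f (w + ‖θ‖ ^ 2 - 2 * ‖θ‖ * t * Real.sqrt w)) :=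
  stmt19_general d hd θ f hf_meas hf_nonneg ρ hρ_meas hρ_nonneg ω hω0 hω1 h hh_meas hrisk
end
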